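/- arXiv:1004.4222 — 3 statements merged into one kernel-verified Lean document; each statement's English description precedes it below -/
import Mathlib

section
/- Let x ∈ R^n with support S of size k, and let h ∈ R^n satisfy ‖x + h‖₁ ≤ ‖x‖₁. Then ‖h‖₁ ≤ 2√k ‖h‖₂, i.e., s(h) ≤ 4k whenever h ≠ 0. -/
open Finset

/-! Off the support `S` of `x`, the coordinates of `x + h` are those of `h`, so
`‖x + h‖₁ ≤ ‖x‖₁` forces the mass of `h` outside `S` to be at most its mass on `S`
(triangle inequality on `S`). Hence `‖h‖₁ ≤ 2 ∑_{i ∈ S} |h i|`, and Cauchy–Schwarz on the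
`k` coordinates in `S` bounds this by `2 √k ‖h‖₂`. -/

theorem sum_abs_compl_le_sum_abs_of_sum_abs_add_le {ι : Type*} [Fintype ι] [DecidableEq ι]
    {S : Finset ι} {x h : ι → ℝ} (hx : ∀ i ∉ S, x i = 0) (hmin : ∑ i, |x i + h i| ≤ ∑ i, |x i|) :
    ∑ i ∈ Sᶜ, |h i| ≤ ∑ i ∈ S, |h i| := by
  have hout : ∑ i ∈ Sᶜ, |x i + h i| = ∑ i ∈ Sᶜ, |h i| :=
    sum_congr rfl fun i hi => by rw [hx i (mem_compl.mp hi), zero_add]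
  have hx_out : ∑ i ∈ Sᶜ, |x i| = 0 :=
    sum_eq_zero fun i hi => by rw [hx i (mem_compl.mp hi), abs_zero]
  have htri : ∑ i ∈ S, |x i| ≤ ∑ i ∈ S, |x i + h i| + ∑ i ∈ S, |h i| := by
    rw [← sum_add_distrib]
    exact sum_le_sum fun i _ => by simpa using abs_sub (x i + h i) (h i)
  rw [← sum_add_sum_compl S, ← sum_add_sum_compl S fun i => |x i|, hout, hx_out] at hmin
  linarith

theorem sum_abs_le_sqrt_card_mul_sqrt_sum_sq {ι : Type*} (s : Finset ι) (f : ι → ℝ) :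
    ∑ i ∈ s, |f i| ≤ √(#s : ℝ) * √(∑ i ∈ s, f i ^ 2) := by
  rw [← Real.sqrt_mul (Nat.cast_nonneg _)]
  exact Real.le_sqrt_of_sq_le <| by
    simpa only [sq_abs] using sq_sum_le_card_mul_sum_sq (s := s) (f := fun i => |f i|)

theorem sq_div_le_sq_of_le_mul_sqrt {a b c : ℝ} (ha : 0 ≤ a) (hb : 0 ≤ b) (h : a ≤ c * √b) :
    a ^ 2 / b ≤ c ^ 2 := by
  refine div_le_of_le_mul₀ hb (sq_nonneg c) ?_
  calc a ^ 2 ≤ (c * √b) ^ 2 := pow_le_pow_left₀ ha h 2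
    _ = c ^ 2 * b := by rw [mul_pow, Real.sq_sqrt hb]

theorem error_vector_l1_sparse {n k : ℕ} (x h : Fin n → ℝ)
    (hk : (Finset.univ.filter fun i => x i ≠ 0).card = k)
    (hmin : ∑ i, |x i + h i| ≤ ∑ i, |x i|) :
    ∑ i, |h i| ≤ 2 * Real.sqrt k * Real.sqrt (∑ i, (h i)^2) ∧
      (h ≠ 0 → (∑ i, |h i|)^2 / (∑ i, (h i)^2) ≤ 4 * k) := by
  set S := univ.filter fun i => x i ≠ 0
  have hcone : ∑ i ∈ Sᶜ, |h i| ≤ ∑ i ∈ S, |h i| :=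
    sum_abs_compl_le_sum_abs_of_sum_abs_add_le (fun i hi => by simpa [S] using hi) hmin
  have hl1 : ∑ i, |h i| ≤ 2 * √k * √(∑ i, h i ^ 2) := calc
    ∑ i, |h i| = ∑ i ∈ S, |h i| + ∑ i ∈ Sᶜ, |h i| := (sum_add_sum_compl S _).symm
    _ ≤ 2 * ∑ i ∈ S, |h i| := by linarith
    _ ≤ 2 * (√k * √(∑ i ∈ S, h i ^ 2)) := by
      gcongr; exact hk ▸ sum_abs_le_sqrt_card_mul_sqrt_sum_sq S h
    _ ≤ 2 * √k * √(∑ i, h i ^ 2) := by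
      rw [← mul_assoc]; gcongr; exact subset_univ S
  refine ⟨hl1, fun _ => ?_⟩
  calc (∑ i, |h i|) ^ 2 / ∑ i, h i ^ 2 ≤ (2 * √k) ^ 2 :=
        sq_div_le_sq_of_le_mul_sqrt (sum_nonneg fun i _ => abs_nonneg _)
          (sum_nonneg fun i _ => sq_nonneg _) hl1
    _ = 4 * k := by rw [mul_pow, Real.sq_sqrt (Nat.cast_nonneg _)]; norm_num
end

section
/- (Basis Pursuit error bound) Let x ∈ R^n have support of size k, let y = Ax + w with ‖w‖₂ ≤ ε, and suppose x̂ satisfies ‖x̂‖₁ ≤ ‖x‖₁ and ‖y − Ax̂‖₂ ≤ ε. If ρ_{4k}(A) > 0, then ‖x̂ − x‖₂ ≤ 2ε/ρ_{4k}(A). -/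
open Finset

noncomputable def l1norm {n : ℕ} (x : Fin n → ℝ) : ℝ := ∑ i, |x i|
noncomputable def l2norm {n : ℕ} (x : Fin n → ℝ) : ℝ := Real.sqrt (∑ i, (x i)^2)

noncomputable def cmsv {m n : ℕ} (A : Matrix (Fin m) (Fin n) ℝ) (s : ℝ) : ℝ :=
  sInf {r | ∃ x : Fin n → ℝ, x ≠ 0 ∧ (l1norm x)^2 ≤ s * (l2norm x)^2 ∧
    r = l2norm (A.mulVec x) / l2norm x}

/-!
The error `h = x̂ - x` satisfies `‖A h‖₂ ≤ 2ε` by the triangle inequality, since both `x` and `x̂`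
are `ε`-close to `y`. On the other hand `‖x̂‖₁ ≤ ‖x‖₁` forces `h` into the cone
`‖h_{Tᶜ}‖₁ ≤ ‖h_T‖₁`, `T` the support of `x`, and Cauchy–Schwarz on `T` then gives
`‖h‖₁² ≤ 4k ‖h‖₂²`. Hence `h` is admissible in the infimum defining `ρ_{4k}(A)`, so
`ρ_{4k}(A) ‖h‖₂ ≤ ‖A h‖₂ ≤ 2ε`.
-/

open Matrix

section Norms

variable {n : ℕ}

lemma l2norm_eq_norm (v : Fin n → ℝ) : l2norm v = ‖WithLp.toLp 2 v‖ := by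
  simp [l2norm, EuclideanSpace.norm_eq]

lemma l2norm_nonneg (v : Fin n → ℝ) : 0 ≤ l2norm v := Real.sqrt_nonneg _

lemma l2norm_zero : l2norm (0 : Fin n → ℝ) = 0 := by
  simp [l2norm]

lemma l2norm_sub_le (a b : Fin n → ℝ) : l2norm (a - b) ≤ l2norm a + l2norm b := by
  simpa only [l2norm_eq_norm, WithLp.toLp_sub] using norm_sub_le _ _

lemma sq_l2norm (v : Fin n → ℝ) : l2norm v ^ 2 = ∑ i, v i ^ 2 :=
  Real.sq_sqrt (by positivity)

lemma l1norm_eq_sum_add_sum_compl (v : Fin n → ℝ) (T : Finset (Fin n)) :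
    l1norm v = ∑ i ∈ T, |v i| + ∑ i ∈ Tᶜ, |v i| :=
  (sum_add_sum_compl T _).symm

end Norms

lemma l2norm_mulVec_sub_le {m n : ℕ} (A : Matrix (Fin m) (Fin n) ℝ) {x xhat : Fin n → ℝ}
    {w y : Fin m → ℝ} {ε : ℝ} (hy : y = A *ᵥ x + w) (hw : l2norm w ≤ ε)
    (hfeas : l2norm (y - A *ᵥ xhat) ≤ ε) : l2norm (A *ᵥ (xhat - x)) ≤ 2 * ε := by
  have hres : A *ᵥ (xhat - x) = w - (y - A *ᵥ xhat) := by
    rw [mulVec_sub, hy]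
    abel
  calc l2norm (A *ᵥ (xhat - x)) ≤ l2norm w + l2norm (y - A *ᵥ xhat) :=
        hres ▸ l2norm_sub_le _ _
    _ ≤ 2 * ε := by linarith

lemma sum_compl_abs_sub_le_of_l1norm_le {n : ℕ} {x xhat : Fin n → ℝ} {T : Finset (Fin n)}
    (hT : ∀ i ∉ T, x i = 0) (hmin : l1norm xhat ≤ l1norm x) :
    ∑ i ∈ Tᶜ, |(xhat - x) i| ≤ ∑ i ∈ T, |(xhat - x) i| := by
  have hx : l1norm x = ∑ i ∈ T, |x i| := by
    rw [l1norm_eq_sum_add_sum_compl x T, add_eq_left]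
    exact sum_eq_zero fun i hi => by simp [hT i (mem_compl.mp hi)]
  have hxhat : l1norm xhat = ∑ i ∈ T, |xhat i| + ∑ i ∈ Tᶜ, |(xhat - x) i| := by
    rw [l1norm_eq_sum_add_sum_compl xhat T]
    congr 1
    exact sum_congr rfl fun i hi => by simp [hT i (mem_compl.mp hi)]
  have hT_le : ∑ i ∈ T, |x i| ≤ ∑ i ∈ T, |xhat i| + ∑ i ∈ T, |(xhat - x) i| := by
    rw [← sum_add_distrib]
    refine sum_le_sum fun i _ => ?_
    have := abs_sub_abs_le_abs_sub (x i) (xhat i)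
    rw [abs_sub_comm] at this
    simp only [Pi.sub_apply]
    linarith
  linarith

lemma sq_l1norm_le_of_sum_compl_le {n : ℕ} {h : Fin n → ℝ} {T : Finset (Fin n)}
    (hcone : ∑ i ∈ Tᶜ, |h i| ≤ ∑ i ∈ T, |h i|) :
    l1norm h ^ 2 ≤ 4 * #T * l2norm h ^ 2 := by
  have hl1 : l1norm h ≤ 2 * ∑ i ∈ T, |h i| := by
    rw [l1norm_eq_sum_add_sum_compl h T]
    linarith
  have hcs : (∑ i ∈ T, |h i|) ^ 2 ≤ (#T : ℝ) * ∑ i, h i ^ 2 :=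
    calc (∑ i ∈ T, |h i|) ^ 2 ≤ #T * ∑ i ∈ T, |h i| ^ 2 := sq_sum_le_card_mul_sum_sq
      _ ≤ #T * ∑ i, h i ^ 2 := by
        simp only [sq_abs]
        gcongr
        exact subset_univ T
  calc l1norm h ^ 2 ≤ (2 * ∑ i ∈ T, |h i|) ^ 2 :=
        pow_le_pow_left₀ (sum_nonneg fun i _ => abs_nonneg _) hl1 2
    _ ≤ 4 * #T * l2norm h ^ 2 := by rw [sq_l2norm]; nlinarith

lemma cmsv_mul_l2norm_le {m n : ℕ} (A : Matrix (Fin m) (Fin n) ℝ) {s : ℝ} {z : Fin n → ℝ}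
    (hz : l1norm z ^ 2 ≤ s * l2norm z ^ 2) : cmsv A s * l2norm z ≤ l2norm (A *ᵥ z) := by
  rcases eq_or_ne z 0 with rfl | hz0
  · simp [l2norm_zero]
  have hpos : 0 < l2norm z := by
    rw [l2norm_eq_norm, norm_pos_iff]
    simpa using hz0
  have hbdd : BddBelow {r | ∃ x : Fin n → ℝ, x ≠ 0 ∧ (l1norm x)^2 ≤ s * (l2norm x)^2 ∧
      r = l2norm (A.mulVec x) / l2norm x} := by
    refine ⟨0, ?_⟩
    rintro r ⟨x, -, -, rfl⟩
    exact div_nonneg (l2norm_nonneg _) (l2norm_nonneg _)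
  rw [← le_div_iff₀ hpos]
  exact csInf_le hbdd ⟨z, hz0, hz, rfl⟩

theorem basis_pursuit_error_bound {m n k : ℕ} (A : Matrix (Fin m) (Fin n) ℝ)
    (x xhat : Fin n → ℝ) (w : Fin m → ℝ) (y : Fin m → ℝ) (ε : ℝ)
    (hk : (Finset.univ.filter fun i => x i ≠ 0).card = k)
    (hy : y = A.mulVec x + w) (hw : l2norm w ≤ ε)
    (hfeas : l2norm (y - A.mulVec xhat) ≤ ε)
    (hmin : l1norm xhat ≤ l1norm x)
    (hρ : 0 < cmsv A (4 * k)) :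
    l2norm (xhat - x) ≤ 2 * ε / cmsv A (4 * k) := by
  have hcone := sum_compl_abs_sub_le_of_l1norm_le (T := univ.filter fun i => x i ≠ 0)
    (by simp) hmin
  have hl1 : l1norm (xhat - x) ^ 2 ≤ 4 * k * l2norm (xhat - x) ^ 2 := by
    simpa only [hk] using sq_l1norm_le_of_sum_compl_le hcone
  rw [le_div_iff₀ hρ, mul_comm]
  exact (cmsv_mul_l2norm_le A hl1).trans (l2norm_mulVec_sub_le A hy hw hfeas)
end

section
/- Let x̂ minimize (1/2)‖y − Az‖₂² + λσ‖z‖₁ where y = Ax + w and ‖Aᵀw‖_∞ ≤ κλσ with κ ∈ (0,1). Then ‖x̂‖₁ ≤ κ‖x̂ − x‖₁ + ‖x‖₁. -/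
open Finset

noncomputable def linfnorm {n : ℕ} (x : Fin n → ℝ) : ℝ := ⨆ i, |x i|

/-!
Comparing the objective at `x̂` with its value at the truth `x` and expanding
`‖w - A(x̂ - x)‖₂² ≥ ‖w‖₂² - 2 ⟨Aᵀw, x̂ - x⟩` gives the basic inequality
`λσ ‖x̂‖₁ ≤ ⟨Aᵀw, x̂ - x⟩ + λσ ‖x‖₁`; Hölder's inequality and `‖Aᵀw‖_∞ ≤ κλσ`
bound the inner product by `κλσ ‖x̂ - x‖₁`, and one divides by `λσ`.
-/

noncomputable def lassoObjective {m n : ℕ} (A : Matrix (Fin m) (Fin n) ℝ) (y : Fin m → ℝ)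
    (lamsig : ℝ) (z : Fin n → ℝ) : ℝ :=
  (1/2) * (l2norm (y - A.mulVec z))^2 + lamsig * l1norm z

lemma l1norm_nonneg {n : ℕ} (u : Fin n → ℝ) : 0 ≤ l1norm u :=
  sum_nonneg fun _ _ => abs_nonneg _

lemma l2norm_sq {m : ℕ} (v : Fin m → ℝ) : (l2norm v)^2 = v ⬝ᵥ v := by
  rw [l2norm, Real.sq_sqrt (sum_nonneg fun _ _ => sq_nonneg _)]
  simp only [dotProduct, sq]

lemma l2norm_sq_sub_ge {m : ℕ} (r v : Fin m → ℝ) :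
    (l2norm r)^2 - 2 * (r ⬝ᵥ v) ≤ (l2norm (r - v))^2 := by
  have hv : 0 ≤ v ⬝ᵥ v := sum_nonneg fun _ _ => mul_self_nonneg _
  have hexpand : (r - v) ⬝ᵥ (r - v) = r ⬝ᵥ r - 2 * (r ⬝ᵥ v) + v ⬝ᵥ v := by
    simp only [sub_dotProduct, dotProduct_sub, dotProduct_comm v r]
    ring
  rw [l2norm_sq, l2norm_sq, hexpand]
  linarith

lemma abs_le_linfnorm {n : ℕ} (g : Fin n → ℝ) (j : Fin n) : |g j| ≤ linfnorm g :=
  le_ciSup (Set.finite_range fun i => |g i|).bddAbove j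

lemma dotProduct_le_linfnorm_mul_l1norm {n : ℕ} (g u : Fin n → ℝ) :
    g ⬝ᵥ u ≤ linfnorm g * l1norm u := by
  calc g ⬝ᵥ u ≤ ∑ j, |g j| * |u j| :=
        sum_le_sum fun j _ => (le_abs_self _).trans (abs_mul _ _).le
    _ ≤ ∑ j, linfnorm g * |u j| :=
        sum_le_sum fun j _ => mul_le_mul_of_nonneg_right (abs_le_linfnorm g j) (abs_nonneg _)
    _ = linfnorm g * l1norm u := by rw [l1norm, mul_sum]

lemma lasso_basic_inequality {m n : ℕ} (A : Matrix (Fin m) (Fin n) ℝ) (y : Fin m → ℝ)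
    (lamsig : ℝ) (xhat z : Fin n → ℝ)
    (hle : lassoObjective A y lamsig xhat ≤ lassoObjective A y lamsig z) :
    lamsig * l1norm xhat ≤
      (A.transpose.mulVec (y - A.mulVec z)) ⬝ᵥ (xhat - z) + lamsig * l1norm z := by
  set r := y - A.mulVec z
  have hres : y - A.mulVec xhat = r - A.mulVec (xhat - z) := by
    simp only [r, Matrix.mulVec_sub]
    abel
  have hadj : r ⬝ᵥ A.mulVec (xhat - z) = (A.transpose.mulVec r) ⬝ᵥ (xhat - z) := by
    rw [Matrix.dotProduct_mulVec, Matrix.mulVec_transpose]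
  have hsq := l2norm_sq_sub_ge r (A.mulVec (xhat - z))
  unfold lassoObjective at hle
  rw [← hres, hadj] at hsq
  linarith

theorem lasso_l1_bound_general {m n : ℕ} (A : Matrix (Fin m) (Fin n) ℝ)
    (x xhat : Fin n → ℝ) (w : Fin m → ℝ) (y : Fin m → ℝ) (lamsig κ : ℝ)
    (hls : 0 < lamsig)
    (hy : y = A.mulVec x + w)
    (hw : linfnorm (A.transpose.mulVec w) ≤ κ * lamsig)
    (hmin : ∀ z : Fin n → ℝ,
      (1/2) * (l2norm (y - A.mulVec xhat))^2 + lamsig * l1norm xhat ≤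
      (1/2) * (l2norm (y - A.mulVec z))^2 + lamsig * l1norm z) :
    l1norm xhat ≤ κ * l1norm (xhat - x) + l1norm x := by
  have hnoise : y - A.mulVec x = w := by rw [hy]; abel
  have hbasic := lasso_basic_inequality A y lamsig xhat x (hmin x)
  rw [hnoise] at hbasic
  have hholder : (A.transpose.mulVec w) ⬝ᵥ (xhat - x) ≤ κ * lamsig * l1norm (xhat - x) :=
    (dotProduct_le_linfnorm_mul_l1norm _ _).trans
      (mul_le_mul_of_nonneg_right hw (l1norm_nonneg _))
  have hscaled : lamsig * l1norm xhat ≤ lamsig * (κ * l1norm (xhat - x) + l1norm x) := by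
    linarith
  exact le_of_mul_le_mul_left hscaled hls

theorem lasso_l1_bound {m n : ℕ} (A : Matrix (Fin m) (Fin n) ℝ)
    (x xhat : Fin n → ℝ) (w : Fin m → ℝ) (y : Fin m → ℝ) (lamsig κ : ℝ)
    (hls : 0 < lamsig) (hκ : κ ∈ Set.Ioo (0:ℝ) 1)
    (hy : y = A.mulVec x + w)
    (hw : linfnorm (A.transpose.mulVec w) ≤ κ * lamsig)
    (hmin : ∀ z : Fin n → ℝ,
      (1/2) * (l2norm (y - A.mulVec xhat))^2 + lamsig * l1norm xhat ≤
      (1/2) * (l2norm (y - A.mulVec z))^2 + lamsig * l1norm z) :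
    l1norm xhat ≤ κ * l1norm (xhat - x) + l1norm x :=
  lasso_l1_bound_general A x xhat w y lamsig κ hls hy hw hmin
end
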